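/- arXiv:2105.08013 — 2 statements merged into one kernel-verified Lean document; each statement's English description precedes it below -/
import Mathlib

section
/- Suppose variable j is independent of the remaining variables under the empirical distribution, i.e., p(z) = p_{{j}}(z_j) · p_{{1,…,d}∖{j}}(z_{−j}) for all z ∈ 𝒳. Then the global uniqueness Shapley value of variable j equals the marginal empirical entropy of variable j: φ^{1:n}_j = 𝓗({j}). -/
/-! Independence of variable `j` from the others, an identity between counts of atoms, extends
to all events of the form (condition on `j`) ∧ (condition on the other variables). Applied to the
cohorts of subject `t` it gives `n · N_t(u ∪ {j}) = N_t({j}) · N_t(u)` for every `u ∌ j`, so every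
marginal contribution `val_t(u ∪ {j}) − val_t(u)` equals `val_t({j})`. The Shapley weights sum to
one, hence `φ_{t,j} = −log₂ p_{j}(x_{tj})`, and the average of this surprisal over the subjects is
the entropy of `p_{j}`. -/

open Finset

variable {n d : ℕ} {X : Fin d → Type} [∀ j, Fintype (X j)] [∀ j, DecidableEq (X j)]

/-- Number of subjects matching subject `t` on every variable in `u`. -/
def cohortN (x : Fin n → ∀ j, X j) (t : Fin n) (u : Finset (Fin d)) : ℕ :=
  (Finset.univ.filter fun i => ∀ j ∈ u, x i j = x t j).card

/-- Value function `val_t(u) = -log₂(N_t(u)/n)`. -/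
noncomputable def uVal (x : Fin n → ∀ j, X j) (t : Fin n) (u : Finset (Fin d)) : ℝ :=
  -Real.logb 2 ((cohortN x t u : ℝ) / n)

/-- Uniqueness Shapley value of variable `j` for subject `t`. -/
noncomputable def uShap (x : Fin n → ∀ j, X j) (t : Fin n) (j : Fin d) : ℝ :=
  (d : ℝ)⁻¹ * ∑ u ∈ ((Finset.univ : Finset (Fin d)).erase j).powerset,
    ((d - 1).choose u.card : ℝ)⁻¹ * (uVal x t (insert j u) - uVal x t u)

/-- Global uniqueness Shapley value. -/
noncomputable def uShapGlobal (x : Fin n → ∀ j, X j) (j : Fin d) : ℝ :=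
  (n : ℝ)⁻¹ * ∑ t, uShap x t j

/-- Marginal empirical probability of observing `z` on the variables in `u`. -/
noncomputable def margP (x : Fin n → ∀ j, X j) (u : Finset (Fin d))
    (z : ∀ j : u, X j.1) : ℝ :=
  ((Finset.univ.filter fun i : Fin n => ∀ j : u, x i j.1 = z j).card : ℝ) / n

/-- Empirical entropy of the variables in `u` (convention `0·log₂ 0 = 0` holds automatically). -/
noncomputable def emEnt (x : Fin n → ∀ j, X j) (u : Finset (Fin d)) : ℝ :=
  -∑ z : (∀ j : u, X j.1), margP x u z * Real.logb 2 (margP x u z)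

section
variable {ι α β : Type*} [Fintype ι] [DecidableEq α] [DecidableEq β] {f : ι → α} {g : ι → β}

theorem card_mul_card_filter_eq_and_eq_of_observed
    (h : ∀ i i', Fintype.card ι * #{k | f k = f i ∧ g k = g i'}
      = #{k | f k = f i} * #{k | g k = g i'})
    (a : α) (b : β) :
    Fintype.card ι * #{k | f k = a ∧ g k = b} = #{k | f k = a} * #{k | g k = b} := by
  by_cases ha : ∃ i, f i = a
  · by_cases hb : ∃ i', g i' = b
    · obtain ⟨i, rfl⟩ := ha
      obtain ⟨i', rfl⟩ := hb
      exact h i i'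
    · push Not at hb
      simp [hb]
  · push Not at ha
    simp [ha]

theorem card_mul_card_filter_mem_and_mem
    (h : ∀ a b, Fintype.card ι * #{k | f k = a ∧ g k = b} = #{k | f k = a} * #{k | g k = b})
    (s : Finset α) (t : Finset β) :
    Fintype.card ι * #{k | f k ∈ s ∧ g k ∈ t} = #{k | f k ∈ s} * #{k | g k ∈ t} := by
  have hst : #{k | f k ∈ s ∧ g k ∈ t} = ∑ a ∈ s, ∑ b ∈ t, #{k | f k = a ∧ g k = b} := by
    rw [← sum_product' (f := fun a b => #{k | f k = a ∧ g k = b})]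
    simpa only [Prod.ext_iff, mem_product] using
      (sum_card_fiberwise_eq_card_filter univ (s ×ˢ t) fun k => (f k, g k)).symm
  rw [hst, ← sum_card_fiberwise_eq_card_filter, ← sum_card_fiberwise_eq_card_filter, sum_mul_sum,
    mul_sum]
  simp_rw [mul_sum, h]
end

theorem Finset.sum_powerset_inv_choose_card {α K : Type*} [Field K] [CharZero K]
    (s : Finset α) : ∑ u ∈ s.powerset, ((#s).choose #u : K)⁻¹ = #s + 1 := by
  rw [sum_powerset_apply_card fun m => ((#s).choose m : K)⁻¹]
  calc ∑ m ∈ range (#s + 1), (#s).choose m • ((#s).choose m : K)⁻¹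
      = ∑ _m ∈ range (#s + 1), (1 : K) := sum_congr rfl fun m hm => by
        have : ((#s).choose m : K) ≠ 0 :=
          Nat.cast_ne_zero.2 (Nat.choose_pos (Nat.lt_succ_iff.1 (mem_range.1 hm))).ne'
        rw [nsmul_eq_mul, mul_inv_cancel₀ this]
    _ = #s + 1 := by simp

section
variable {ι : Type*} [Fintype ι] [DecidableEq ι] {β : ι → Type*}

theorem eq_iff_apply_eq_and_restrict_erase_eq (j : ι) (w z : ∀ k, β k) :
    w = z ↔ w j = z j ∧ (univ.erase j).restrict w = (univ.erase j).restrict z := by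
  refine ⟨fun h => h ▸ ⟨rfl, rfl⟩, fun ⟨hj, hrest⟩ => funext fun k => ?_⟩
  by_cases hk : k = j
  · exact hk ▸ hj
  · exact congrFun hrest ⟨k, mem_erase.2 ⟨hk, mem_univ k⟩⟩
end

section
-- Redeclared so that the outer `Fintype` instances are only assumed where they are used.
variable {n d : ℕ} {X : Fin d → Type} [∀ j, DecidableEq (X j)] (x : Fin n → ∀ j, X j)

def IndepOfRest (j : Fin d) : Prop :=
  ∀ z : ∀ j, X j, margP x univ (univ.restrict z)
    = margP x {j} (({j} : Finset (Fin d)).restrict z)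
      * margP x (univ.erase j) ((univ.erase j).restrict z)

theorem cohortN_div_eq_margP (t : Fin n) (u : Finset (Fin d)) :
    (cohortN x t u : ℝ) / n = margP x u (u.restrict (x t)) := by
  simp only [cohortN, margP, restrict, Subtype.forall]

theorem card_mul_card_filter_eq_and_restrict_eq_of_indep {j : Fin d} (hindep : IndepOfRest x j)
    (i i' : Fin n) :
    n * #{k | x k j = x i j ∧ (univ.erase j).restrict (x k) = (univ.erase j).restrict (x i')}
      = #{k | x k j = x i j} *
        #{k | (univ.erase j).restrict (x k) = (univ.erase j).restrict (x i')} := by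
  set z := Function.update (x i') j (x i j)
  have hzj : z j = x i j := Function.update_self ..
  have hzrest : (univ.erase j).restrict z = (univ.erase j).restrict (x i') :=
    funext fun m => Function.update_of_ne (mem_erase.1 m.2).1 ..
  have hn : (n : ℝ) ≠ 0 := Nat.cast_ne_zero.2 i.pos.ne'
  have h := hindep z
  simp only [← hzj, ← hzrest, ← eq_iff_apply_eq_and_restrict_erase_eq]
  simp only [margP, restrict, Subtype.forall, mem_univ, forall_const, mem_singleton, forall_eq] at h
  simp only [funext_iff, restrict, Subtype.forall]
  field_simp at h
  rw [mul_comm]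
  exact_mod_cast h

theorem card_mul_cohortN_insert_of_indep [∀ j, Fintype (X j)] {j : Fin d}
    (hindep : IndepOfRest x j)
    (t : Fin n) {u : Finset (Fin d)} (hu : j ∉ u) :
    n * cohortN x t (insert j u) = cohortN x t {j} * cohortN x t u := by
  set T : Finset (∀ m : (univ.erase j : Finset (Fin d)), X m) :=
    {w | ∀ m : (univ.erase j : Finset (Fin d)), m.1 ∈ u → w m = x t m}
  have hT : ∀ w : ∀ k, X k, (univ.erase j).restrict w ∈ T ↔ ∀ m ∈ u, w m = x t m := by
    intro w
    simp only [T, mem_filter, mem_univ, true_and, and_true, restrict, Subtype.forall, mem_erase]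
    exact ⟨fun h m hm => h m (ne_of_mem_of_not_mem hm hu) hm,
      fun h m _ hm => h m hm⟩
  have hcohorts := card_mul_card_filter_mem_and_mem
    (card_mul_card_filter_eq_and_eq_of_observed (f := fun k => x k j)
      (g := fun k => (univ.erase j).restrict (x k))
      (by simpa only [Fintype.card_fin] using
        card_mul_card_filter_eq_and_restrict_eq_of_indep x hindep))
    {x t j} T
  simp only [Fintype.card_fin, mem_singleton, hT] at hcohorts
  simpa only [cohortN, forall_mem_insert, mem_singleton, forall_eq] using hcohorts

theorem cohortN_pos (t : Fin n) (u : Finset (Fin d)) : 0 < cohortN x t u :=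
  card_pos.2 ⟨t, by simp⟩

theorem uVal_insert_of_indep [∀ j, Fintype (X j)] {j : Fin d}
    (hindep : IndepOfRest x j)
    (t : Fin n) {u : Finset (Fin d)} (hu : j ∉ u) :
    uVal x t (insert j u) = uVal x t {j} + uVal x t u := by
  have hn : (0 : ℝ) < n := by exact_mod_cast t.pos
  have hpos : ∀ v, (cohortN x t v : ℝ) / n ≠ 0 :=
    fun v => (div_pos (by exact_mod_cast cohortN_pos x t v) hn).ne'
  have hfactor : (cohortN x t (insert j u) : ℝ) / n
      = (cohortN x t {j} / n) * (cohortN x t u / n) := by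
    field_simp
    exact_mod_cast (mul_comm _ _).trans (card_mul_cohortN_insert_of_indep x hindep t hu)
  rw [uVal, uVal, uVal, hfactor, Real.logb_mul (hpos _) (hpos _)]
  ring

theorem uShap_eq_of_forall_insert_sub {t : Fin n} {j : Fin d} {c : ℝ}
    (h : ∀ u, j ∉ u → uVal x t (insert j u) - uVal x t u = c) : uShap x t j = c := by
  have hcard : #(univ.erase j) = d - 1 := by simp
  have hd : ((#(univ.erase j) : ℕ) : ℝ) + 1 = d := by
    rw [hcard]; exact_mod_cast Nat.sub_add_cancel j.pos
  rw [uShap, ← hcard,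
    sum_congr rfl fun u hu => by rw [h u fun hj => notMem_erase j univ (mem_powerset.1 hu hj)],
    ← sum_mul, sum_powerset_inv_choose_card, hd]
  field_simp [j.pos.ne']

theorem emEnt_eq_inv_mul_sum_neg_logb_margP [∀ j, Fintype (X j)] (u : Finset (Fin d)) :
    emEnt x u = (n : ℝ)⁻¹ * ∑ t, -Real.logb 2 (margP x u (u.restrict (x t))) := by
  rw [emEnt, ← sum_fiberwise univ (fun t => u.restrict (x t)), mul_sum, ← sum_neg_distrib]
  refine sum_congr rfl fun z _ => ?_
  have hfiber : ∀ t ∈ ({t | u.restrict (x t) = z} : Finset (Fin n)),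
      -Real.logb 2 (margP x u (u.restrict (x t))) = -Real.logb 2 (margP x u z) :=
    fun t ht => by rw [(mem_filter.1 ht).2]
  have hmarg : margP x u z = #{t | u.restrict (x t) = z} / n := by
    simp only [margP, funext_iff, restrict]
  rw [sum_congr rfl hfiber, sum_const, nsmul_eq_mul, hmarg]
  ring
end

theorem globalUniquenessShapley_eq_entropy_of_indep_general
    (n d : ℕ)
    (X : Fin d → Type) [∀ j, Fintype (X j)] [∀ j, DecidableEq (X j)]
    (x : Fin n → ∀ j, X j) (j : Fin d)
    (hindep : ∀ z : ∀ j, X j,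
      margP x Finset.univ (fun k => z k.1)
        = margP x {j} (fun k => z k.1) * margP x (Finset.univ.erase j) (fun k => z k.1)) :
    uShapGlobal x j = emEnt x {j} := by
  rw [uShapGlobal, emEnt_eq_inv_mul_sum_neg_logb_margP]
  refine congrArg _ (sum_congr rfl fun t _ => ?_)
  rw [uShap_eq_of_forall_insert_sub x fun u hu => by
    rw [uVal_insert_of_indep x hindep t hu, add_sub_cancel_right], uVal, cohortN_div_eq_margP]

/-- if variable `j` is independent of the remaining variables under the
empirical distribution, then the global uniqueness Shapley value of variable `j` equals the
marginal empirical entropy of variable `j`. -/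
theorem globalUniquenessShapley_eq_entropy_of_indep
    (n d : ℕ) (hn : 1 ≤ n) (hd : 1 ≤ d)
    (X : Fin d → Type) [∀ j, Fintype (X j)] [∀ j, DecidableEq (X j)]
    (x : Fin n → ∀ j, X j) (j : Fin d)
    (hindep : ∀ z : ∀ j, X j,
      margP x Finset.univ (fun k => z k.1)
        = margP x {j} (fun k => z k.1) * margP x (Finset.univ.erase j) (fun k => z k.1)) :
    uShapGlobal x j = emEnt x {j} :=
  globalUniquenessShapley_eq_entropy_of_indep_general n d X x j hindep
end

section
/- If d = 3, then the global uniqueness Shapley value of variable 1 satisfies φ^{1:n}_1 = (1/3)·𝓗({1}) + (1/6)·𝓗({1}|{2}) + (1/6)·𝓗({1}|{3}) + (1/3)·𝓗({1}|{2,3}). -/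
/-!
Since `N_t(u)/n` is the empirical probability `p_u(x_{t,u})` of subject `t`'s own profile on `u`,
averaging `val_t(u)` over the subjects is averaging `-log₂ p_u` against `p_u`, i.e. `𝓗(u)`.
Averaging the Shapley formula over `t` therefore replaces every value `val_t(u)` by `𝓗(u)`, and
for `d = 3` the four coalitions not containing the first variable carry the weights
`1/3, 1/6, 1/6, 1/3`.
-/

open Finset

variable {n d : ℕ} {X : Fin d → Type} [∀ j, Fintype (X j)] [∀ j, DecidableEq (X j)]

lemma inv_mul_sum_uVal_eq_emEnt (x : Fin n → ∀ j, X j) (u : Finset (Fin d)) :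
    (n : ℝ)⁻¹ * ∑ t, uVal x t u = emEnt x u := by
  have hval : ∀ t, uVal x t u = -Real.logb 2 (margP x u fun j => x t j.1) := fun t => by
    unfold uVal margP cohortN
    congr 5
    ext i
    simp only [mem_filter, mem_univ, true_and, Subtype.forall]
  simp only [hval]
  rw [← sum_fiberwise univ (fun t => fun j : u => x t j.1), emEnt, mul_sum, ← sum_neg_distrib]
  refine sum_congr rfl fun z _ => ?_
  rw [sum_congr rfl fun t ht => by rw [(mem_filter.mp ht).2], sum_const, nsmul_eq_mul,
    mul_neg, mul_neg, ← mul_assoc]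
  congr 2
  simp only [margP, inv_mul_eq_div, funext_iff]

lemma emEnt_empty (x : Fin n → ∀ j, X j) : emEnt x (∅ : Finset (Fin d)) = 0 := by
  have hmarg : ∀ z, margP x ∅ z = (n : ℝ) / n := fun z => by
    rw [margP, filter_true_of_mem fun i _ j => absurd j.2 (notMem_empty _), card_univ,
      Fintype.card_fin]
  rcases eq_or_ne (n : ℝ) 0 with hn | hn <;> simp [emEnt, hmarg, hn]

theorem uShapGlobal_eq_sum_condEnt (x : Fin n → ∀ j, X j) (j : Fin d) :
    uShapGlobal x j = (d : ℝ)⁻¹ * ∑ u ∈ (univ.erase j).powerset,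
      ((d - 1).choose #u : ℝ)⁻¹ * (emEnt x (insert j u) - emEnt x u) := by
  simp only [← inv_mul_sum_uVal_eq_emEnt, uShapGlobal, uShap, ← mul_sub, ← sum_sub_distrib,
    mul_sum]
  rw [sum_comm]
  exact sum_congr rfl fun u _ => sum_congr rfl fun t _ => by ring

/-- Variables `1, 2, 3` are the indices `0, 1, 2 : Fin 3`. -/
theorem globalUniquenessShapley_three_vars_general
    (n : ℕ)
    (X : Fin 3 → Type) [∀ j, Fintype (X j)] [∀ j, DecidableEq (X j)]
    (x : Fin n → ∀ j, X j) :
    uShapGlobal x 0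
      = (1 / 3) * emEnt x {0}
        + (1 / 6) * (emEnt x {0, 1} - emEnt x {1})
        + (1 / 6) * (emEnt x {0, 2} - emEnt x {2})
        + (1 / 3) * (emEnt x {0, 1, 2} - emEnt x {1, 2}) := by
  have hcoalitions : (univ.erase (0 : Fin 3)).powerset = {∅, {1}, {2}, {1, 2}} := by decide
  rw [uShapGlobal_eq_sum_condEnt, hcoalitions, sum_insert (by decide), sum_insert (by decide),
    sum_insert (by decide), sum_singleton, emEnt_empty]
  simp only [LawfulSingleton.insert_empty_eq, card_empty, card_singleton,
    card_pair (by decide : (1 : Fin 3) ≠ 2)]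
  norm_num
  ring

/-- for `d = 3`, the global uniqueness Shapley value of the first variable is
`φ^{1:n}_1 = (1/3)𝓗({1}) + (1/6)𝓗({1}|{2}) + (1/6)𝓗({1}|{3}) + (1/3)𝓗({1}|{2,3})`
(variables `1,2,3` are indices `0,1,2 : Fin 3`). -/
theorem globalUniquenessShapley_three_vars
    (n : ℕ) (hn : 1 ≤ n)
    (X : Fin 3 → Type) [∀ j, Fintype (X j)] [∀ j, DecidableEq (X j)]
    (x : Fin n → ∀ j, X j) :
    uShapGlobal x 0
      = (1 / 3) * emEnt x {0}
        + (1 / 6) * (emEnt x {0, 1} - emEnt x {1})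
        + (1 / 6) * (emEnt x {0, 2} - emEnt x {2})
        + (1 / 3) * (emEnt x {0, 1, 2} - emEnt x {1, 2}) :=
  globalUniquenessShapley_three_vars_general n X x
end
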